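/- arXiv:1802.08572 — 5 statements merged into one kernel-verified Lean document; each statement's English description precedes it below -/
import Mathlib

section
/- For Ax ≠ 0, Z_p(x) = (p-1)! · exp(-‖y‖₂²/2) · ‖Ax‖₂^{-p} · exp(ω²/4) · D_{-p}(ω), where ω = (‖x‖₁ - ⟨Ax, y⟩)/‖Ax‖₂ and D_{-p} is the parabolic cylinder function given by the Erdélyi integral representation exp(z²/4)·Γ(ν)·D_{-ν}(z) = ∫_0^∞ exp(-r²/2 - zr) r^{ν-1} dr for ν > 0. -/
open MeasureTheory Real

theorem stmt3 (p n : ℕ) (hp : 1 ≤ p) (hn : 1 ≤ n)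
    (A : Matrix (Fin n) (Fin p) ℝ) (y : Fin n → ℝ) (x : Fin p → ℝ)
    (hAx : A.mulVec x ≠ 0) (ω D : ℝ)
    (hω : ω = ((∑ j, |x j|) - ∑ i, A.mulVec x i * y i) / Real.sqrt (∑ i, (A.mulVec x i)^2))
    (hD : Real.exp (ω^2/4) * Real.Gamma p * D
      = ∫ r in Set.Ioi (0:ℝ), Real.exp (-r^2/2 - ω*r) * r^(p-1)) :
    (∫ r in Set.Ioi (0:ℝ),
      Real.exp (-((∑ i, (A.mulVec (r • x) i - y i)^2) / 2 + ∑ j, |(r • x) j|)) * r^(p-1))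
    = (Nat.factorial (p-1) : ℝ) * Real.exp (-(∑ i, (y i)^2) / 2)
      * (Real.sqrt (∑ i, (A.mulVec x i)^2)) ^ (-(p:ℤ)) * Real.exp (ω^2/4) * D := by
  set a : Fin n → ℝ := A.mulVec x with ha
  set Q : ℝ := ∑ i, (a i)^2 with hQdef
  set C : ℝ := ∑ i, a i * y i with hCdef
  set Y : ℝ := ∑ i, (y i)^2 with hYdef
  set L : ℝ := ∑ j, |x j| with hLdef
  have hQ : 0 < Q := by
    obtain ⟨i, hi⟩ := Function.ne_iff.mp hAx
    exact Finset.sum_pos' (fun j _ => sq_nonneg _)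
      ⟨i, Finset.mem_univ i, pow_two_pos_of_ne_zero hi⟩
  set s : ℝ := Real.sqrt Q with hsdef
  have hs : 0 < s := Real.sqrt_pos.mpr hQ
  have hs2 : s^2 = Q := Real.sq_sqrt hQ.le
  have hωs : ω * s = L - C := by rw [hω]; field_simp
  have hsub : p - 1 + 1 = p := Nat.succ_pred_eq_of_pos hp
  have step1 : (∫ r in Set.Ioi (0:ℝ),
      Real.exp (-((∑ i, (A.mulVec (r • x) i - y i)^2) / 2 + ∑ j, |(r • x) j|)) * r^(p-1))
      = ∫ r in Set.Ioi (0:ℝ), (Real.exp (-Y/2) * (s^(p-1))⁻¹) *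
        ((fun u => Real.exp (-u^2/2 - ω*u) * u^(p-1)) (s * r)) := by
    refine setIntegral_congr_fun measurableSet_Ioi (fun r hr => ?_)
    have hr : (0:ℝ) < r := hr
    have habs : ∑ j, |(r • x) j| = r * L := by
      simp [Pi.smul_apply, smul_eq_mul, abs_mul, abs_of_pos hr, ← Finset.mul_sum, hLdef]
    have hsum : ∑ i, (A.mulVec (r • x) i - y i)^2 = r^2 * Q - 2*r*C + Y := by
      rw [Matrix.mulVec_smul]
      have : ∀ i, ((r • a) i - y i)^2
          = r^2 * (a i)^2 - 2*r*(a i * y i) + (y i)^2 := by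
        intro i; simp only [Pi.smul_apply, smul_eq_mul]; ring
      simp only [← ha, this, Finset.sum_add_distrib, Finset.sum_sub_distrib, ← Finset.mul_sum]; rfl
    have key : -((r^2*Q - 2*r*C + Y)/2 + r*L) = -Y/2 + (-(s*r)^2/2 - ω*(s*r)) := by
      linear_combination (r^2/2) * hs2 + r * hωs
    rw [hsum, habs, key, Real.exp_add, mul_pow]
    have hsp : (s:ℝ)^(p-1) ≠ 0 := by positivity
    field_simp
    ring
  rw [step1, integral_const_mul _ _,
    integral_comp_mul_left_Ioi (fun u => Real.exp (-u^2/2 - ω*u) * u^(p-1)) 0 hs,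
    mul_zero, smul_eq_mul, ← hD]
  have hGamma : Real.Gamma p = (Nat.factorial (p-1) : ℝ) := by
    rw [← hsub]; push_cast; rw [Real.Gamma_nat_eq_factorial]
  rw [hGamma, zpow_neg, zpow_natCast]
  have hpow : s^p = s^(p-1) * s := by rw [← pow_succ, hsub]
  rw [hpow]
  have h1 : (s:ℝ)^(p-1) ≠ 0 := by positivity
  field_simp
end

section
/- 0 minimizes f(x) = ‖Ax - y‖₂²/2 + ‖x‖₁ if and only if for every s ∈ R^p with ‖s‖₁ = 1 and As ≠ 0, the quantity ω(s) = (1 - ⟨As, y⟩)/‖As‖₂ is nonnegative, and for every s with ‖s‖₁ = 1 and As = 0 the map r ↦ f(rs) is nondecreasing. -/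
/-!
Write `f(x) = ‖Ax - y‖²/2 + ‖x‖₁`. Along a ray, `f(tx) - f(0) = t²‖Ax‖²/2 + t(‖x‖₁ - ⟨Ax, y⟩)`
for `t ≥ 0`, so letting `t → 0⁺` shows that `0` minimizes `f` exactly when `⟨Ax, y⟩ ≤ ‖x‖₁`
for all `x`. By homogeneity this only has to be checked on the unit `ℓ¹` sphere, where it reads
`ω(s) ≥ 0` if `As ≠ 0` and holds trivially if `As = 0`; in the latter case `f(rs) = f(0) + |r|`,
which is nondecreasing on `r ≥ 0` regardless.
-/

open Real Matrix Finset Filter Topology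

variable {m k : Type*} [Fintype m] [Fintype k]

noncomputable def lassoObjective (A : Matrix m k ℝ) (y : m → ℝ) (x : k → ℝ) : ℝ :=
  (∑ i, ((A *ᵥ x) i - y i) ^ 2) / 2 + ∑ j, |x j|

lemma sum_mul_sub_sq (t : ℝ) (v y : m → ℝ) :
    ∑ i, (t * v i - y i) ^ 2 = t ^ 2 * ∑ i, v i ^ 2 - 2 * t * (v ⬝ᵥ y) + ∑ i, y i ^ 2 := by
  simp only [dotProduct, Finset.mul_sum, ← Finset.sum_sub_distrib, ← Finset.sum_add_distrib]
  exact Finset.sum_congr rfl fun _ _ => by ring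

lemma lassoObjective_smul (A : Matrix m k ℝ) (y : m → ℝ) (x : k → ℝ) (t : ℝ) :
    lassoObjective A y (t • x) = lassoObjective A y 0
      + t ^ 2 * (∑ i, (A *ᵥ x) i ^ 2) / 2 + (|t| * ∑ j, |x j| - t * ((A *ᵥ x) ⬝ᵥ y)) := by
  have h := sum_mul_sub_sq t (A *ᵥ x) y
  simp only [lassoObjective, mulVec_smul, mulVec_zero, Pi.smul_apply, smul_eq_mul, Pi.zero_apply,
    abs_mul, abs_zero, zero_sub, even_two, Even.neg_pow, Finset.sum_const_zero,
    ← Finset.mul_sum] at h ⊢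
  rw [h]
  ring

lemma nonneg_of_forall_pos_mul_add_nonneg {a b : ℝ} (h : ∀ t > 0, 0 ≤ t * a + b) : 0 ≤ b := by
  have hlim : Tendsto (fun t => t * a + b) (𝓝[>] 0) (𝓝 b) := by
    have hc : Continuous fun t : ℝ => t * a + b := by fun_prop
    exact (hc.tendsto' 0 b (by simp)).mono_left nhdsWithin_le_nhds
  exact ge_of_tendsto hlim (eventually_nhdsWithin_of_forall h)

lemma forall_lassoObjective_zero_le_iff (A : Matrix m k ℝ) (y : m → ℝ) :
    (∀ x, lassoObjective A y 0 ≤ lassoObjective A y x) ↔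
      ∀ x, (A *ᵥ x) ⬝ᵥ y ≤ ∑ j, |x j| := by
  refine ⟨fun h x => ?_, fun h x => ?_⟩
  · suffices 0 ≤ ∑ j, |x j| - (A *ᵥ x) ⬝ᵥ y by linarith
    refine nonneg_of_forall_pos_mul_add_nonneg (a := (∑ i, (A *ᵥ x) i ^ 2) / 2) fun t ht => ?_
    have hray := h (t • x)
    rw [lassoObjective_smul, abs_of_pos ht] at hray
    refine nonneg_of_mul_nonneg_right ?_ ht
    linarith
  · have hray := lassoObjective_smul A y x 1
    have hq : 0 ≤ ∑ i, (A *ᵥ x) i ^ 2 := Finset.sum_nonneg fun _ _ => sq_nonneg _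
    simp only [one_smul, one_pow, one_mul, abs_one] at hray
    linarith [h x]

lemma forall_dotProduct_le_sum_abs_iff (A : Matrix m k ℝ) (y : m → ℝ) :
    (∀ x, (A *ᵥ x) ⬝ᵥ y ≤ ∑ j, |x j|) ↔ ∀ s, ∑ j, |s j| = 1 → (A *ᵥ s) ⬝ᵥ y ≤ 1 := by
  refine ⟨fun h s hs => hs ▸ h s, fun h x => ?_⟩
  rcases (Finset.sum_nonneg fun j _ => abs_nonneg (x j)).eq_or_lt with hx | hx
  · have : x = 0 := funext fun j => abs_eq_zero.mp <|
      (Finset.sum_eq_zero_iff_of_nonneg fun j _ => abs_nonneg (x j)).mp hx.symm j (mem_univ j)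
    simp [this]
  · set r := ∑ j, |x j|
    have hs : ∑ j, |(r⁻¹ • x) j| = 1 := by
      simp only [Pi.smul_apply, smul_eq_mul, abs_mul, ← Finset.mul_sum, abs_inv, abs_of_pos hx]
      exact inv_mul_cancel₀ hx.ne'
    have := h _ hs
    rwa [mulVec_smul, smul_dotProduct, smul_eq_mul, inv_mul_le_iff₀ hx, mul_one] at this

lemma div_sqrt_sum_sq_nonneg_iff {a : ℝ} {v : m → ℝ} (hv : v ≠ 0) :
    0 ≤ a / √(∑ i, v i ^ 2) ↔ 0 ≤ a := by
  have : 0 < ∑ i, v i ^ 2 := by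
    obtain ⟨i, hi⟩ := Function.ne_iff.mp hv
    exact Finset.sum_pos' (fun j _ => sq_nonneg _) ⟨i, mem_univ i, pow_two_pos_of_ne_zero hi⟩
  rw [le_div_iff₀ (sqrt_pos.mpr this), zero_mul]

lemma monotoneOn_lassoObjective_smul {A : Matrix m k ℝ} (y : m → ℝ) {s : k → ℝ}
    (hs : A *ᵥ s = 0) : MonotoneOn (fun r : ℝ => lassoObjective A y (r • s)) (Set.Ici 0) := by
  have h : ∀ r, lassoObjective A y (r • s) = lassoObjective A y 0 + |r| * ∑ j, |s j| := by
    intro r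
    simp [lassoObjective_smul, hs]
  intro a ha b hb hab
  simp only [h, abs_of_nonneg (Set.mem_Ici.mp ha), abs_of_nonneg (Set.mem_Ici.mp hb)]
  gcongr

theorem stmt7_general (p n : ℕ)
    (A : Matrix (Fin n) (Fin p) ℝ) (y : Fin n → ℝ) :
    (∀ x : Fin p → ℝ,
        (∑ i, (A.mulVec 0 i - y i)^2) / 2 + (∑ j, |(0 : Fin p → ℝ) j|)
          ≤ (∑ i, (A.mulVec x i - y i)^2) / 2 + ∑ j, |x j|)
    ↔ ((∀ s : Fin p → ℝ, (∑ j, |s j|) = 1 → A.mulVec s ≠ 0 →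
          0 ≤ (1 - ∑ i, A.mulVec s i * y i) / Real.sqrt (∑ i, (A.mulVec s i)^2)) ∧
        (∀ s : Fin p → ℝ, (∑ j, |s j|) = 1 → A.mulVec s = 0 →
          MonotoneOn (fun r : ℝ =>
            (∑ i, (A.mulVec (r • s) i - y i)^2) / 2 + ∑ j, |(r • s) j|)
            (Set.Ici (0:ℝ)))) := by
  change (∀ x, lassoObjective A y 0 ≤ lassoObjective A y x) ↔ _
  rw [forall_lassoObjective_zero_le_iff, forall_dotProduct_le_sum_abs_iff]
  refine ⟨fun h => ⟨fun s hs hAs => ?_, fun s _ hAs => monotoneOn_lassoObjective_smul y hAs⟩,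
    fun ⟨hω, _⟩ s hs => ?_⟩
  · exact (div_sqrt_sum_sq_nonneg_iff hAs).mpr (sub_nonneg.mpr (h s hs))
  · by_cases hAs : A *ᵥ s = 0
    · simp [hAs]
    · exact sub_nonneg.mp ((div_sqrt_sum_sq_nonneg_iff hAs).mp (hω s hs hAs))

theorem stmt7 (p n : ℕ) (hp : 1 ≤ p) (hn : 1 ≤ n)
    (A : Matrix (Fin n) (Fin p) ℝ) (y : Fin n → ℝ) :
    (∀ x : Fin p → ℝ,
        (∑ i, (A.mulVec 0 i - y i)^2) / 2 + (∑ j, |(0 : Fin p → ℝ) j|)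
          ≤ (∑ i, (A.mulVec x i - y i)^2) / 2 + ∑ j, |x j|)
    ↔ ((∀ s : Fin p → ℝ, (∑ j, |s j|) = 1 → A.mulVec s ≠ 0 →
          0 ≤ (1 - ∑ i, A.mulVec s i * y i) / Real.sqrt (∑ i, (A.mulVec s i)^2)) ∧
        (∀ s : Fin p → ℝ, (∑ j, |s j|) = 1 → A.mulVec s = 0 →
          MonotoneOn (fun r : ℝ =>
            (∑ i, (A.mulVec (r • s) i - y i)^2) / 2 + ∑ j, |(r • s) j|)
            (Set.Ici (0:ℝ)))) :=
  stmt7_general p n A y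
end

section
/- For a > 0, b ≥ 0, p ≥ 2, q > 0 and r* = (-b + √(b² + 4(p-1)))/(2a), one has ∫_{q r*}^∞ exp(-(ar+b)²/2) r^{p-1} dr ≤ exp(-(a r* + b)²/2 + p - 1) · (r*)^p · Γ(p, q(p-1)) / (p-1)^p, where Γ(ν, x) = ∫_x^∞ e^{-t} t^{ν-1} dt is the upper incomplete gamma function. -/
open MeasureTheory Real

theorem stmt10 (a b q : ℝ) (p : ℕ) (ha : 0 < a) (hb : 0 ≤ b) (hp : 2 ≤ p) (hq : 0 < q)
    (rs : ℝ) (hrs : rs = (-b + Real.sqrt (b^2 + 4*((p:ℝ)-1))) / (2*a)) :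
    (∫ r in Set.Ioi (q * rs), Real.exp (-(a*r+b)^2/2) * r^(p-1))
      ≤ Real.exp (-(a*rs+b)^2/2 + (p:ℝ) - 1) * rs^p
        * (∫ t in Set.Ioi (q*((p:ℝ)-1)), Real.exp (-t) * t^(p-1)) / ((p:ℝ)-1)^p := by
  set c : ℝ := (p:ℝ) - 1 with hc
  have hc1 : (1:ℝ) ≤ c := by
    have : (2:ℝ) ≤ (p:ℝ) := by exact_mod_cast hp
    simp [hc]; linarith
  have hc0 : (0:ℝ) < c := by linarith
  set s : ℝ := Real.sqrt (b^2 + 4*c) with hsdef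
  have hs2 : s^2 = b^2 + 4*c := Real.sq_sqrt (by nlinarith)
  have hsb : b < s := by nlinarith [Real.sqrt_nonneg (b^2 + 4*c)]
  have hars : a * rs = (-b + s) / 2 := by
    rw [hrs]; field_simp
  have hrs0 : 0 < rs := by
    have h : 0 < a * rs := by rw [hars]; linarith
    nlinarith
  have hkey : a * rs * (a * rs + b) = c := by
    rw [hars]; nlinarith
  set m : ℝ := c / rs with hm
  have hm0 : 0 < m := by positivity
  set K : ℝ := Real.exp (-(a*rs+b)^2/2 + (p:ℝ) - 1) with hK
  set f : ℝ → ℝ := fun t => Real.exp (-t) * t^(p-1) with hf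
  -- integrability of f on Ioi (q*c)
  have hfint : IntegrableOn f (Set.Ioi (q*c)) := by
    have h1 : IntegrableOn (fun x : ℝ => Real.exp (-x) * x ^ ((p:ℝ) - 1)) (Set.Ioi 0) :=
      Real.GammaIntegral_convergent (by positivity)
    have h2 : IntegrableOn (fun x : ℝ => Real.exp (-x) * x ^ ((p:ℝ) - 1)) (Set.Ioi (q*c)) :=
      h1.mono_set (Set.Ioi_subset_Ioi (by positivity))
    refine (integrableOn_congr_fun (fun x hx => ?_) measurableSet_Ioi).mp h2
    have hx0 : 0 < x := lt_trans (by positivity) hx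
    rw [hf]
    congr 1
    rw [← Real.rpow_natCast x (p-1)]
    congr 1
    have : (1:ℕ) ≤ p := by omega
    push_cast [Nat.cast_sub this]
    ring
  set I : ℝ := ∫ t in Set.Ioi (q*c), f t with hI
  have hInn : 0 ≤ I := by
    apply setIntegral_nonneg measurableSet_Ioi
    intro x hx
    have hx0 : 0 < x := lt_trans (by positivity) hx
    positivity
  -- change of variables
  have hmrs : m * rs = c := by rw [hm]; field_simp
  have hcov : (∫ x in Set.Ioi (q*rs), f (m * x)) = (rs/c) * I := by
    rw [integral_comp_mul_left_Ioi f (q*rs) hm0]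
    have : m * (q * rs) = q * c := by rw [mul_comm q rs, ← mul_assoc, hmrs]; ring
    rw [this, smul_eq_mul, hI]
    congr 1
    field_simp [hm]; exact hmrs.symm
  -- the dominating function
  have hqc : m * (q * rs) = q * c := by rw [mul_comm q rs, ← mul_assoc, hmrs]; ring
  have hgint : IntegrableOn (fun x => K / m^(p-1) * f (m * x)) (Set.Ioi (q*rs)) := by
    apply Integrable.const_mul
    exact (integrableOn_Ioi_comp_mul_left_iff f (q*rs) hm0).mpr (by rw [hqc]; exact hfint)
  have hgi : (∫ x in Set.Ioi (q*rs), K / m^(p-1) * f (m * x)) = K * (rs/c)^p * I := by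
    rw [MeasureTheory.integral_const_mul, hcov]
    have hp1 : p - 1 + 1 = p := by omega
    have : (rs/c)^p = (rs/c)^(p-1) * (rs/c) := by rw [← pow_succ, hp1]
    rw [this]
    have hmne : m^(p-1) ≠ 0 := by positivity
    field_simp [hm]
    have h1 : m^(p-1) * (rs/c)^(p-1) = 1 := by
      rw [← mul_pow, mul_div_assoc', hmrs, div_self hc0.ne', one_pow]
    linear_combination (-(K*I)) * h1
  -- main bound
  have hmono : (∫ r in Set.Ioi (q * rs), Real.exp (-(a*r+b)^2/2) * r^(p-1))
      ≤ ∫ x in Set.Ioi (q*rs), K / m^(p-1) * f (m * x) := by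
    apply integral_mono_of_nonneg
    · rw [Filter.EventuallyLE, ae_restrict_iff' measurableSet_Ioi]
      filter_upwards with x hx
      have hx0 : 0 < x := lt_trans (by positivity) hx
      positivity
    · exact hgint
    · rw [Filter.EventuallyLE, ae_restrict_iff' measurableSet_Ioi]
      filter_upwards with x hx
      have hx0 : 0 < x := lt_trans (by positivity) hx
      have heq : K / m^(p-1) * f (m * x) = K * Real.exp (-(m*x)) * x^(p-1) := by
        rw [hf]
        simp only [mul_pow]
        have hmne : (m:ℝ)^(p-1) ≠ 0 := by positivity
        have h9 : K / m^(p-1) * (Real.exp (-(m*x)) * (m^(p-1) * x^(p-1)))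
            = (m^(p-1) / m^(p-1)) * (K * Real.exp (-(m*x)) * x^(p-1)) := by ring
        rw [h9, div_self hmne, one_mul]
      rw [heq]
      have hxp : (0:ℝ) ≤ x^(p-1) := by positivity
      have hexple : Real.exp (-(a*x+b)^2/2) ≤ K * Real.exp (-(m*x)) := by
        rw [hK, ← Real.exp_add]
        apply Real.exp_le_exp.mpr
        have hstep : -(a*x+b)^2/2 ≤ -(a*rs+b)^2/2 + c - m * x := by
          have hgoal : (-(a*x+b)^2/2) * rs ≤ ((-(a*rs+b)^2/2 + c) * rs - c * x) := by
            nlinarith [mul_nonneg (mul_nonneg ha.le hrs0.le) (sq_nonneg (x - rs)), hkey]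
          have e1 : -(a*x+b)^2/2 = (-(a*x+b)^2/2 * rs) / rs := by
            field_simp
            try ring
          have e2 : -(a*rs+b)^2/2 + c - m * x = ((-(a*rs+b)^2/2 + c) * rs - c * x) / rs := by
            rw [hm]; field_simp
            try ring
          rw [e1, e2]
          exact (div_le_div_iff_of_pos_right hrs0).mpr hgoal
        calc -(a*x+b)^2/2 ≤ -(a*rs+b)^2/2 + c - m*x := hstep
          _ = -(a * rs + b) ^ 2 / 2 + ↑p - 1 + -(m * x) := by rw [hc]; try ring
      calc Real.exp (-(a*x+b)^2/2) * x^(p-1) ≤ (K * Real.exp (-(m*x))) * x^(p-1) :=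
            mul_le_mul_of_nonneg_right hexple hxp
        _ = K * Real.exp (-(m*x)) * x^(p-1) := by ring
  calc (∫ r in Set.Ioi (q * rs), Real.exp (-(a*r+b)^2/2) * r^(p-1))
      ≤ ∫ x in Set.Ioi (q*rs), K / m^(p-1) * f (m * x) := hmono
    _ = K * (rs/c)^p * I := hgi
    _ = K * rs^p * I / c^p := by rw [div_pow]; field_simp; try ring
end

section
/- Let μ be the probability measure on (0,∞) with density proportional to exp(-(ar+b)²/2) r^{p-1}, where a > 0, b ≥ 0, p ≥ 2. Then for all q > 0, μ([q r*, ∞)) ≤ p·e^{p-1}·Γ(p, q(p-1))/(p-1)^p, where r* = (-b + √(b²+4(p-1)))/(2a). -/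
/-!
The Gaussian factor is log-concave, so it lies below its tangent exponential at `r*`:
`exp (-(a r + b)² / 2) ≤ exp (y² / 2 - y b) · exp (-y a r)` with `y = a r* + b`. This bounds the
tail by an upper incomplete Gamma integral with rate `y a`. The normalising integral is at least
`exp (-y² / 2) · r*ᵖ / p`, since the density is decreasing on `[0, r*]`. The choice of `r*` as a
root of `a r (a r + b) = p - 1` makes `y a r* = p - 1`, and the ratio of the two bounds is the
claimed constant.
-/

open MeasureTheory Real Set

lemma integrableOn_Ioi_exp_neg_mul_mul_pow {L : ℝ} (hL : 0 < L) (n : ℕ) :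
    IntegrableOn (fun r => exp (-(L * r)) * r ^ n) (Ioi 0) := by
  have hn : (-1 : ℝ) < n := by linarith [n.cast_nonneg (α := ℝ)]
  refine (integrableOn_rpow_mul_exp_neg_mul_rpow hn one_pos hL).congr_fun (fun r _ => ?_)
    measurableSet_Ioi
  simp only [rpow_natCast, rpow_one]
  ring_nf

lemma integral_Ioi_exp_neg_mul_mul_pow {L : ℝ} (hL : 0 < L) (c : ℝ) (n : ℕ) :
    ∫ r in Ioi c, exp (-(L * r)) * r ^ n
      = (∫ t in Ioi (L * c), exp (-t) * t ^ n) / L ^ (n + 1) := by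
  have hscale : ∫ r in Ioi c, exp (-(L * r)) * (L * r) ^ n
      = L ^ n * ∫ r in Ioi c, exp (-(L * r)) * r ^ n := by
    rw [← integral_const_mul]
    congr 1 with r
    ring
  rw [integral_comp_mul_left_Ioi (fun t => exp (-t) * t ^ n) c hL, smul_eq_mul] at hscale
  rw [eq_div_iff (by positivity)]
  field_simp at hscale
  linear_combination -hscale

-- the tangent line of the concave function `x ↦ -x² / 2` at `y`
lemma exp_neg_sq_le_mul_exp_neg_mul (a b y r : ℝ) :
    exp (-(a * r + b) ^ 2 / 2) ≤ exp (y ^ 2 / 2 - y * b) * exp (-(y * a * r)) := by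
  rw [← exp_add, exp_le_exp]
  nlinarith [sq_nonneg (a * r + b - y)]

section
variable {a : ℝ} (b : ℝ)

lemma integrableOn_Ioi_exp_neg_sq_mul_pow (ha : 0 < a) (n : ℕ) :
    IntegrableOn (fun r => exp (-(a * r + b) ^ 2 / 2) * r ^ n) (Ioi 0) := by
  refine ((integrableOn_Ioi_exp_neg_mul_mul_pow ha n).const_mul (exp (1 / 2 - b))).mono'
    (by fun_prop : Continuous _).aestronglyMeasurable.restrict ?_
  filter_upwards [ae_restrict_mem measurableSet_Ioi] with r (hr : 0 < r)
  rw [norm_of_nonneg (by positivity), ← mul_assoc]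
  gcongr
  simpa using exp_neg_sq_le_mul_exp_neg_mul a b 1 r

lemma setIntegral_Ioi_exp_neg_sq_mul_pow_le (ha : 0 < a) {y c : ℝ} (hy : 0 < y) (hc : 0 ≤ c)
    (n : ℕ) :
    ∫ r in Ioi c, exp (-(a * r + b) ^ 2 / 2) * r ^ n
      ≤ exp (y ^ 2 / 2 - y * b) * (∫ t in Ioi (y * a * c), exp (-t) * t ^ n)
          / (y * a) ^ (n + 1) := by
  have hya : 0 < y * a := mul_pos hy ha
  rw [mul_div_assoc, ← integral_Ioi_exp_neg_mul_mul_pow hya, ← integral_const_mul]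
  have hsub : Ioi c ⊆ Ioi 0 := Ioi_subset_Ioi hc
  refine setIntegral_mono_on ((integrableOn_Ioi_exp_neg_sq_mul_pow b ha n).mono_set hsub)
    (((integrableOn_Ioi_exp_neg_mul_mul_pow hya n).mono_set hsub).const_mul _)
    measurableSet_Ioi fun r hr => ?_
  have hr : 0 ≤ r := hc.trans hr.le
  rw [← mul_assoc]
  gcongr
  exact exp_neg_sq_le_mul_exp_neg_mul a b y r

lemma exp_neg_sq_mul_pow_div_le_integral (ha : 0 ≤ a) (hb : 0 ≤ b) {s : ℝ} (hs : 0 ≤ s) (n : ℕ)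
    (hint : IntegrableOn (fun r => exp (-(a * r + b) ^ 2 / 2) * r ^ n) (Ioi 0)) :
    exp (-(a * s + b) ^ 2 / 2) * (s ^ (n + 1) / (n + 1))
      ≤ ∫ r in Ioi 0, exp (-(a * r + b) ^ 2 / 2) * r ^ n := by
  have hpow : ∫ r in Ioc 0 s, exp (-(a * s + b) ^ 2 / 2) * r ^ n
      = exp (-(a * s + b) ^ 2 / 2) * (s ^ (n + 1) / (n + 1)) := by
    rw [integral_const_mul, ← intervalIntegral.integral_of_le hs, integral_pow]
    simp
  rw [← hpow]
  calc ∫ r in Ioc 0 s, exp (-(a * s + b) ^ 2 / 2) * r ^ n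
      ≤ ∫ r in Ioc 0 s, exp (-(a * r + b) ^ 2 / 2) * r ^ n := by
        refine setIntegral_mono_on (by fun_prop : Continuous _).integrableOn_Ioc
          (hint.mono_set Ioc_subset_Ioi_self) measurableSet_Ioc fun r ⟨hr, hrs⟩ => ?_
        gcongr
    _ ≤ ∫ r in Ioi 0, exp (-(a * r + b) ^ 2 / 2) * r ^ n := by
        refine setIntegral_mono_set hint ?_ Ioc_subset_Ioi_self.eventuallyLE
        filter_upwards [ae_restrict_mem measurableSet_Ioi] with r (hr : 0 < r)
        positivity

end

section
variable {a b c s : ℝ}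

lemma mul_mul_add_eq_of_eq_quadratic_root (ha : 0 < a) (hc : 0 ≤ b ^ 2 + 4 * c)
    (hs : s = (-b + √(b ^ 2 + 4 * c)) / (2 * a)) : a * s * (a * s + b) = c := by
  have h2as : 2 * a * s = -b + √(b ^ 2 + 4 * c) := by
    rw [hs]; field_simp
  linear_combination (2 * a * s + b + √(b ^ 2 + 4 * c)) / 4 * h2as + sq_sqrt hc / 4

lemma pos_of_eq_quadratic_root (ha : 0 < a) (hc : 0 < c)
    (hs : s = (-b + √(b ^ 2 + 4 * c)) / (2 * a)) : 0 < s := by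
  have hb : b < √(b ^ 2 + 4 * c) :=
    (le_abs_self b).trans_lt (by rw [← sqrt_sq_eq_abs]; gcongr; linarith)
  rw [hs]
  exact div_pos (by linarith) (by positivity)

end

theorem stmt11 (a b q : ℝ) (p : ℕ) (ha : 0 < a) (hb : 0 ≤ b) (hp : 2 ≤ p) (hq : 0 < q)
    (rs : ℝ) (hrs : rs = (-b + Real.sqrt (b^2 + 4*((p:ℝ)-1))) / (2*a)) :
    (∫ r in Set.Ioi (q * rs), Real.exp (-(a*r+b)^2/2) * r^(p-1))
        / (∫ r in Set.Ioi (0:ℝ), Real.exp (-(a*r+b)^2/2) * r^(p-1))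
      ≤ p * Real.exp ((p:ℝ)-1)
        * (∫ t in Set.Ioi (q*((p:ℝ)-1)), Real.exp (-t) * t^(p-1)) / ((p:ℝ)-1)^p := by
  obtain ⟨n, rfl⟩ : ∃ n, p = n + 1 := ⟨p - 1, by omega⟩
  simp only [Nat.add_sub_cancel, Nat.cast_add, Nat.cast_one, add_sub_cancel_right] at hrs ⊢
  have hn : (0 : ℝ) < n := by exact_mod_cast (by omega : 0 < n)
  have hrs_pos : 0 < rs := pos_of_eq_quadratic_root ha hn hrs
  have hroot : a * rs * (a * rs + b) = n :=
    mul_mul_add_eq_of_eq_quadratic_root ha (by positivity) hrs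
  set y := a * rs + b with hy_def
  have hy : 0 < y := by positivity
  have hnum := setIntegral_Ioi_exp_neg_sq_mul_pow_le b ha hy (mul_pos hq hrs_pos).le n
  rw [show y * a * (q * rs) = q * n by rw [← hroot]; ring] at hnum
  have hden := exp_neg_sq_mul_pow_div_le_integral b ha.le hb hrs_pos.le n
    (integrableOn_Ioi_exp_neg_sq_mul_pow b ha n)
  have hnum_nonneg : 0 ≤ ∫ r in Ioi (q * rs), exp (-(a * r + b) ^ 2 / 2) * r ^ n :=
    setIntegral_nonneg measurableSet_Ioi fun r hr =>
      have : 0 < r := (mul_pos hq hrs_pos).trans hr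
      by positivity
  have hden_pos : 0 < exp (-y ^ 2 / 2) * (rs ^ (n + 1) / (n + 1)) := by positivity
  refine ((div_le_div_of_nonneg_left hnum_nonneg hden_pos hden).trans
    (div_le_div_of_nonneg_right hnum hden_pos.le)).trans_eq ?_
  have hexp : exp (y ^ 2 / 2 - y * b) = exp n * exp (-y ^ 2 / 2) := by
    rw [← exp_add]
    congr 1
    linear_combination hroot + y * hy_def
  have hpow : (y * a) ^ (n + 1) * rs ^ (n + 1) = (n : ℝ) ^ (n + 1) := by
    rw [← mul_pow, ← hroot]; ring
  rw [hexp, ← hpow]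
  field_simp
end

section
/- For every real a > 1, B > 1 and x > B(a-1)/(B-1), one has x^{a-1} e^{-x} < Γ(a, x) < B x^{a-1} e^{-x}, where Γ(a,x) = ∫_x^∞ e^{-t} t^{a-1} dt. -/
open MeasureTheory Real

lemma pos_setIntegral_Ioi {g : ℝ → ℝ} {x : ℝ} (hg : IntegrableOn g (Set.Ioi x))
    (hpos : ∀ t ∈ Set.Ioi x, 0 < g t) : 0 < ∫ t in Set.Ioi x, g t := by
  have h0 : 0 ≤ᵐ[volume.restrict (Set.Ioi x)] g := by
    filter_upwards [ae_restrict_mem measurableSet_Ioi] with t ht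
    exact (hpos t ht).le
  rw [setIntegral_pos_iff_support_of_nonneg_ae h0 hg]
  have hsub : Set.Ioi x ⊆ Function.support g ∩ Set.Ioi x := fun t ht =>
    ⟨ne_of_gt (hpos t ht), ht⟩
  refine lt_of_lt_of_le ?_ (measure_mono hsub)
  simp [Real.volume_Ioi]

set_option maxHeartbeats 1000000 in
theorem stmt12 (a B x : ℝ) (ha : 1 < a) (hB : 1 < B) (hx : B / (B-1) * (a-1) < x) :
    x ^ (a-1) * Real.exp (-x) < (∫ t in Set.Ioi x, Real.exp (-t) * t ^ (a-1)) ∧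
    (∫ t in Set.Ioi x, Real.exp (-t) * t ^ (a-1)) < B * x ^ (a-1) * Real.exp (-x) := by
  have hB1 : 0 < B - 1 := by linarith
  have ha1 : 0 < a - 1 := by linarith
  have hx0 : 0 < x := lt_trans (by positivity) hx
  -- integrability of f
  have hf_int : IntegrableOn (fun t => Real.exp (-t) * t ^ (a-1)) (Set.Ioi x) :=
    (Real.GammaIntegral_convergent (by linarith : (0:ℝ) < a)).mono_set (Set.Ioi_subset_Ioi hx0.le)
  -- integrability of h = exp(-t) t^(a-2)
  have hh_int : IntegrableOn (fun t => Real.exp (-t) * t ^ (a-2)) (Set.Ioi x) := by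
    have hmaj : IntegrableOn (fun t => x⁻¹ * (Real.exp (-t) * t ^ (a-1))) (Set.Ioi x) :=
      hf_int.const_mul _
    refine hmaj.mono' ?_ ?_
    · exact ((Continuous.continuousOn (by continuity)).mul
        (ContinuousOn.rpow_const continuousOn_id (fun t ht =>
          Or.inl (ne_of_gt (lt_trans hx0 ht))))).aestronglyMeasurable measurableSet_Ioi
    · filter_upwards [ae_restrict_mem measurableSet_Ioi] with t ht
      have ht0 : 0 < t := lt_trans hx0 ht
      have hpow : t ^ (a-2) ≤ x⁻¹ * t ^ (a-1) := by
        have he : t ^ (a-2) = t⁻¹ * t ^ (a-1) := by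
          rw [← Real.rpow_neg_one t, ← Real.rpow_add ht0]; ring_nf
        rw [he]
        exact mul_le_mul_of_nonneg_right (by exact inv_anti₀ hx0 ht.le)
          (Real.rpow_nonneg ht0.le _)
      rw [Real.norm_eq_abs, abs_of_nonneg (by positivity)]
      calc Real.exp (-t) * t ^ (a-2) ≤ Real.exp (-t) * (x⁻¹ * t ^ (a-1)) :=
            mul_le_mul_of_nonneg_left hpow (Real.exp_pos _).le
        _ = x⁻¹ * (Real.exp (-t) * t ^ (a-1)) := by ring
  -- FTC
  set F : ℝ → ℝ := fun t => -(t ^ (a-1) * Real.exp (-t)) with hF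
  have hderiv : ∀ t ∈ Set.Ioi x, HasDerivAt F
      (Real.exp (-t) * t ^ (a-1) - (a-1) * (Real.exp (-t) * t ^ (a-2))) t := by
    intro t ht
    have ht0 : (0:ℝ) < t := lt_trans hx0 ht
    have h1 : HasDerivAt (fun s : ℝ => s ^ (a-1)) ((a-1) * t ^ (a-2)) t := by
      have := Real.hasDerivAt_rpow_const (x := t) (p := a-1) (Or.inl (ne_of_gt ht0))
      convert this using 2; ring_nf
    have h2 : HasDerivAt (fun s : ℝ => Real.exp (-s)) (-Real.exp (-t)) t := by
      simpa using ((hasDerivAt_id t).neg).exp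
    have h3 := (h1.mul h2).neg
    exact h3.congr_deriv (by ring)
  have hcont : ContinuousWithinAt F (Set.Ici x) x := by
    apply ContinuousWithinAt.neg
    apply ContinuousWithinAt.mul
    · exact (ContinuousAt.continuousWithinAt
        (Real.continuousAt_rpow_const x (a-1) (Or.inl (ne_of_gt hx0))))
    · exact (Continuous.continuousWithinAt (by continuity))
  have htend : Filter.Tendsto F Filter.atTop (nhds 0) := by
    have h := (tendsto_rpow_mul_exp_neg_mul_atTop_nhds_zero (a-1) 1 one_pos).neg
    rw [neg_zero] at h
    exact h.congr (fun t => by simp [hF])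
  have hF'int : IntegrableOn
      (fun t => Real.exp (-t) * t ^ (a-1) - (a-1) * (Real.exp (-t) * t ^ (a-2)))
      (Set.Ioi x) := hf_int.sub (hh_int.const_mul _)
  have hftc := integral_Ioi_of_hasDerivAt_of_tendsto hcont hderiv hF'int htend
  rw [hF] at hftc
  simp only [zero_sub, neg_neg] at hftc
  have hsplit : (∫ t in Set.Ioi x,
      (Real.exp (-t) * t ^ (a-1) - (a-1) * (Real.exp (-t) * t ^ (a-2))))
      = (∫ t in Set.Ioi x, Real.exp (-t) * t ^ (a-1))
        - (a-1) * (∫ t in Set.Ioi x, Real.exp (-t) * t ^ (a-2)) := by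
    rw [integral_sub hf_int (hh_int.const_mul _), integral_const_mul]
  set I := ∫ t in Set.Ioi x, Real.exp (-t) * t ^ (a-1)
  set K := ∫ t in Set.Ioi x, Real.exp (-t) * t ^ (a-2)
  have hkey : I - (a-1) * K = x ^ (a-1) * Real.exp (-x) := by
    rw [← hsplit]; exact hftc
  have hKpos : 0 < K := by
    apply pos_setIntegral_Ioi hh_int
    intro t ht
    have ht0 : 0 < t := lt_trans hx0 ht
    positivity
  constructor
  · nlinarith
  · -- upper bound: need (B-1)*I - B*(a-1)*K > 0
    have hG : 0 < ∫ t in Set.Ioi x,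
        ((B-1) * (Real.exp (-t) * t ^ (a-1)) - B * (a-1) * (Real.exp (-t) * t ^ (a-2))) := by
      apply pos_setIntegral_Ioi ((hf_int.const_mul _).sub (hh_int.const_mul _))
      intro t ht
      have ht0 : 0 < t := lt_trans hx0 ht
      have htx : B / (B-1) * (a-1) < t := lt_trans hx ht
      have hlin : B * (a-1) < (B-1) * t := by
        have h1 := mul_lt_mul_of_pos_right htx hB1
        have h2 : B / (B-1) * (B-1) = B := div_mul_cancel₀ B hB1.ne'
        nlinarith [h1, h2]
      have he2 : t ^ (a-1) = t * t ^ (a-2) := by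
        rw [show a-1 = 1+(a-2) by ring, Real.rpow_add ht0, Real.rpow_one]
      simp only [Pi.sub_apply]
      rw [he2]
      have hpow2 : 0 < t ^ (a-2) := Real.rpow_pos_of_pos ht0 _
      have hexp : 0 < Real.exp (-t) := Real.exp_pos _
      nlinarith [mul_pos hexp hpow2]
    have hGeq : (∫ t in Set.Ioi x,
        ((B-1) * (Real.exp (-t) * t ^ (a-1)) - B * (a-1) * (Real.exp (-t) * t ^ (a-2))))
        = (B-1) * I - B * (a-1) * K := by
      rw [integral_sub (hf_int.const_mul _) (hh_int.const_mul _),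
        integral_const_mul, integral_const_mul]
    rw [hGeq] at hG
    nlinarith
end
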